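/- arXiv:2309.02344 — 3 statements merged into one kernel-verified Lean document; each statement's English description precedes it below -/
import Mathlib

section
/- Let T be a torus, Q a finite group acting on T by continuous automorphisms, and G = T ⋊ Q the corresponding (topological) semidirect product. Then the identity component of the commutator subgroup of G equals the subgroup ⁅Q,T⁆ generated by all commutators ⁅q,t⁆ with q ∈ Q and t ∈ T (where Q and T are regarded as subgroups of G via the canonical inclusions). -/
/-- A topological group is a (topological) torus if it is isomorphic, as a topological group,
to `(ℝ/ℤ)ⁿ` for some `n`. -/
def IsTopologicalTorus (T : Type*) [TopologicalSpace T] [Group T] : Prop :=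
  ∃ (n : ℕ) (e : T ≃* Multiplicative (Fin n → AddCircle (1 : ℝ))),
    Continuous e ∧ Continuous e.symm

/-- The topology on a semidirect product `N ⋊[φ] Q` of topological groups: the one induced
from the product topology via the canonical identification with `N × Q`. -/
instance SemidirectProduct.topologicalSpace {N Q : Type*} [Group N] [TopologicalSpace N]
    [Group Q] [TopologicalSpace Q] (φ : Q →* MulAut N) : TopologicalSpace (N ⋊[φ] Q) :=
  TopologicalSpace.induced (fun g => (g.left, g.right)) inferInstance

/-!
Let `S = actionCommutator φ ≤ T` be the subgroup generated by the displacements `φ q t * t⁻¹`;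
then `⁅Q, T⁆ = S` inside `G`. Since `T` is commutative and `Q` acts trivially on `T ⧸ S`,
`g ↦ g.left mod S` is a homomorphism from `G` to an abelian group, so every element of `[G, G]`
has its `T`-part in `S`; hence `⁅Q, T⁆ = [G, G] ∩ T`, which is clopen in `[G, G]` because `Q` is
discrete. It is also connected: `S` is generated by the connected sets `{φ q t * t⁻¹ | t ∈ T}`,
all containing `1`.
-/

open scoped commutatorElement

theorem connectedComponentIn_eq_inter_of_isClopen {X : Type*} [TopologicalSpace X]
    {F U : Set X} {x : X} (hU : IsClopen U) (hFU : IsPreconnected (F ∩ U)) (hx : x ∈ F ∩ U) :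
    connectedComponentIn F x = F ∩ U :=
  (Set.subset_inter (connectedComponentIn_subset F x)
      (isPreconnected_connectedComponentIn.subset_isClopen hU
        ⟨x, mem_connectedComponentIn hx.1, hx.2⟩)).antisymm
    (hFU.subset_connectedComponentIn hx Set.inter_subset_left)

theorem Subgroup.isConnected_closure {G : Type*} [Group G] [TopologicalSpace G]
    [IsTopologicalGroup G] {s : Set G} (hs : IsPreconnected s) (h1 : (1 : G) ∈ s) :
    IsConnected (closure s : Set G) := by
  set H := closure s
  have hH : connectedComponentIn (H : Set G) 1 = (connectedComponentOfOne H).map H.subtype :=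
    connectedComponentIn_eq_image H.one_mem
  suffices (H : Set G) ⊆ connectedComponentIn H 1 by
    rw [← (connectedComponentIn_subset _ _).antisymm this]
    exact isConnected_connectedComponentIn_iff.2 H.one_mem
  rw [hH, SetLike.coe_subset_coe, closure_le, ← hH]
  exact hs.subset_connectedComponentIn h1 subset_closure

namespace IsTopologicalTorus

variable {T : Type*} [TopologicalSpace T] [Group T]

theorem mul_comm (hT : IsTopologicalTorus T) (a b : T) : a * b = b * a := by
  obtain ⟨n, e, -, -⟩ := hT
  exact e.injective (by rw [map_mul, map_mul, _root_.mul_comm])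

theorem connectedSpace (hT : IsTopologicalTorus T) : ConnectedSpace T := by
  obtain ⟨n, e, -, he⟩ := hT
  have : ConnectedSpace (Multiplicative (Fin n → AddCircle (1 : ℝ))) :=
    inferInstanceAs (ConnectedSpace (Fin n → AddCircle (1 : ℝ)))
  exact e.symm.surjective.connectedSpace he

end IsTopologicalTorus

namespace SemidirectProduct

section Algebra

variable {N G : Type*} [Group N] [Group G]

def actionCommutator (φ : G →* MulAut N) : Subgroup N :=
  Subgroup.closure (⋃ g, Set.range fun n : N => φ g n * n⁻¹)

variable {φ : G →* MulAut N}

theorem commutatorElement_inr_inl (g : G) (n : N) :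
    ⁅(inr g : N ⋊[φ] G), (inl n : N ⋊[φ] G)⁆ = inl (φ g n * n⁻¹) := by
  simp [commutatorElement_def, inl_aut]

theorem commutator_range_inr_range_inl :
    ⁅(inr : G →* N ⋊[φ] G).range, (inl : N →* N ⋊[φ] G).range⁆ =
      (actionCommutator φ).map inl := by
  rw [Subgroup.commutator_def, actionCommutator, MonoidHom.map_closure]
  congr 1
  ext x
  simp [commutatorElement_inr_inl, eq_comm]

end Algebra

section CommGroup

variable {N G : Type*} [CommGroup N] [Group G] {φ : G →* MulAut N}

theorem left_mem_actionCommutator_of_mem_commutator {x : N ⋊[φ] G} (hx : x ∈ commutator (N ⋊[φ] G)) :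
    x.left ∈ actionCommutator φ := by
  set S := actionCommutator φ
  have hS : ∀ g n, (φ g n : N ⧸ S) = n := fun g n =>
    QuotientGroup.eq_iff_div_mem.2 (by
      rw [div_eq_mul_inv]
      exact Subgroup.subset_closure (Set.mem_iUnion.2 ⟨g, n, rfl⟩))
  let χ : N ⋊[φ] G →* N ⧸ S := lift (QuotientGroup.mk' S) 1 fun g => by ext n; simp [hS]
  have hχ : χ x = x.left := mul_one _
  rw [← QuotientGroup.eq_one_iff, ← hχ]
  exact Abelianization.commutator_subset_ker χ hx

theorem commutator_range_inr_range_inl_eq_inf_ker_rightHom :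
    ⁅(inr : G →* N ⋊[φ] G).range, (inl : N →* N ⋊[φ] G).range⁆ =
      commutator (N ⋊[φ] G) ⊓ rightHom.ker := by
  refine le_antisymm (le_inf ?_ ?_) ?_
  · rw [commutator_def]
    exact Subgroup.commutator_mono le_top le_top
  · rw [commutator_range_inr_range_inl, ← range_inl_eq_ker_rightHom]
    exact Subgroup.map_le_range _ _
  · rintro x ⟨hx, hright⟩
    rw [commutator_range_inr_range_inl]
    refine ⟨x.left, left_mem_actionCommutator_of_mem_commutator hx, ?_⟩
    ext
    · rfl
    · exact hright.symm

end CommGroup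

section Topology

variable {N G : Type*} [Group N] [Group G] [TopologicalSpace N] {φ : G →* MulAut N}

theorem isConnected_actionCommutator [IsTopologicalGroup N] [PreconnectedSpace N]
    (hφ : ∀ g, Continuous (φ g)) : IsConnected (actionCommutator φ : Set N) :=
  Subgroup.isConnected_closure
    (isPreconnected_iUnion ⟨1, Set.mem_iInter.2 fun g => ⟨1, by simp⟩⟩
      fun g => isPreconnected_range ((hφ g).mul continuous_inv))
    (Set.mem_iUnion.2 ⟨1, 1, by simp⟩)

variable [TopologicalSpace G]

theorem continuous_inl : Continuous (inl : N → N ⋊[φ] G) :=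
  continuous_induced_rng.2 (continuous_id.prodMk continuous_const)

theorem continuous_rightHom : Continuous (rightHom : N ⋊[φ] G → G) :=
  continuous_snd.comp (continuous_induced_dom : Continuous fun x : N ⋊[φ] G => (x.left, x.right))

theorem isConnected_commutator_range_inr_range_inl [IsTopologicalGroup N] [PreconnectedSpace N]
    (hφ : ∀ g, Continuous (φ g)) :
    IsConnected ((⁅(inr : G →* N ⋊[φ] G).range, (inl : N →* N ⋊[φ] G).range⁆ :
      Subgroup (N ⋊[φ] G)) : Set (N ⋊[φ] G)) := by
  rw [commutator_range_inr_range_inl, Subgroup.coe_map]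
  exact (isConnected_actionCommutator hφ).image _ continuous_inl.continuousOn

end Topology

end SemidirectProduct

open SemidirectProduct in
theorem identityComponent_commutator_eq_commutator_inr_inl_general
    {T : Type*} [Group T] [TopologicalSpace T] [IsTopologicalGroup T]
    (hT : IsTopologicalTorus T)
    {Q : Type*} [Group Q] [TopologicalSpace Q] [DiscreteTopology Q]
    (φ : Q →* MulAut T) (hφ : ∀ q : Q, Continuous (φ q)) :
    Subtype.val '' connectedComponent (1 : commutator (T ⋊[φ] Q)) =
      ((⁅(inr : Q →* T ⋊[φ] Q).range, (inl : T →* T ⋊[φ] Q).range⁆ :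
        Subgroup (T ⋊[φ] Q)) : Set (T ⋊[φ] Q)) := by
  let _ : CommGroup T := { ‹Group T› with mul_comm := hT.mul_comm }
  have := hT.connectedSpace
  have hconn := (isConnected_commutator_range_inr_range_inl hφ).isPreconnected
  rw [commutator_range_inr_range_inl_eq_inf_ker_rightHom, Subgroup.coe_inf, MonoidHom.coe_ker]
    at hconn ⊢
  exact (connectedComponentIn_eq_image (one_mem _)).symm.trans
    (connectedComponentIn_eq_inter_of_isClopen
      ((isClopen_discrete {1}).preimage continuous_rightHom) hconn ⟨one_mem _, map_one _⟩)

open SemidirectProduct in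
/-- For `G = T ⋊ Q` a semidirect product of a finite (discrete) group `Q` acting continuously
on a torus `T`, the identity component of the commutator subgroup of `G` equals the subgroup
`⁅Q, T⁆` generated by commutators of elements of `Q` with elements of `T`. -/
theorem identityComponent_commutator_eq_commutator_inr_inl
    {T : Type*} [Group T] [TopologicalSpace T] [IsTopologicalGroup T]
    (hT : IsTopologicalTorus T)
    {Q : Type*} [Group Q] [Finite Q] [TopologicalSpace Q] [DiscreteTopology Q]
    (φ : Q →* MulAut T) (hφ : ∀ q : Q, Continuous (φ q)) :
    Subtype.val '' connectedComponent (1 : commutator (T ⋊[φ] Q)) =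
      ((⁅(inr : Q →* T ⋊[φ] Q).range, (inl : T →* T ⋊[φ] Q).range⁆ :
        Subgroup (T ⋊[φ] Q)) : Set (T ⋊[φ] Q)) :=
  identityComponent_commutator_eq_commutator_inr_inl_general hT φ hφ
end

section
/- Let N be an abelian group, Q a group acting on N by automorphisms, and G = N ⋊ Q the semidirect product. Then the commutator subgroup of G equals the set product [Q,Q]·⁅Q,N⁆; that is, every element of [G,G] can be written as r·x with r ∈ [Q,Q] and x ∈ ⁅Q,N⁆, where [Q,Q] is the commutator subgroup of Q (viewed inside G) and ⁅Q,N⁆ is the subgroup of G generated by all commutators ⁅q,n⁆ with q ∈ Q and n ∈ N. -/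
/-!
Modulo `K = ⁅N, G⁆` the image of `N` is central, so a commutator `⁅n q, m p⁆` of
`G = N ⋊ Q` agrees with `⁅q, p⁆ ∈ [Q, Q]` up to an element of `K`. Since `N` is abelian,
`⁅n, m p⁆ = ⁅n, p⁆`, hence `K = ⁅Q, N⁆`; and `K` is normal, so `[Q, Q] ⊔ K = [Q, Q] * K`.
-/

open scoped commutatorElement
open Subgroup

section Group

variable {G : Type*} [Group G]

theorem commutatorElement_mul_mul_of_mem_center {z w : G} (hz : z ∈ center G)
    (hw : w ∈ center G) (x y : G) : ⁅z * x, w * y⁆ = ⁅x, y⁆ := by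
  rw [mem_center_iff] at hz hw
  calc ⁅z * x, w * y⁆ = z * (x * w * y * x⁻¹) * z⁻¹ * y⁻¹ * w⁻¹ := by
        rw [commutatorElement_def]; group
    _ = x * (w * (y * x⁻¹ * y⁻¹)) * w⁻¹ := by rw [← hz]; group
    _ = ⁅x, y⁆ := by rw [← hw, commutatorElement_def]; group

theorem map_mk_le_center_of_commutator_top_le {A K : Subgroup G} [K.Normal]
    (h : ⁅A, ⊤⁆ ≤ K) : A.map (QuotientGroup.mk' K) ≤ center (G ⧸ K) := by
  rw [← commutator_top_right_eq_bot_iff_le_center,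
    ← map_top_of_surjective _ (QuotientGroup.mk'_surjective K), ← map_commutator,
    Subgroup.map_eq_bot_iff, QuotientGroup.ker_mk']
  exact h

theorem commutator_le_commutator_sup_commutator_top {A B : Subgroup G} [A.Normal]
    (hAB : A ⊔ B = ⊤) : commutator G ≤ ⁅B, B⁆ ⊔ ⁅A, ⊤⁆ := by
  have hcenter := map_mk_le_center_of_commutator_top_le (le_refl ⁅A, ⊤⁆)
  rw [← QuotientGroup.ker_mk' ⁅A, ⊤⁆, ← comap_map_eq, commutator_def, commutator_le]
  intro g _ h _
  obtain ⟨a, ha, b, hb, rfl⟩ := mem_sup_of_normal_left.mp (hAB ▸ mem_top g)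
  obtain ⟨a', ha', b', hb', rfl⟩ := mem_sup_of_normal_left.mp (hAB ▸ mem_top h)
  rw [mem_comap, map_commutatorElement, map_mul, map_mul,
    commutatorElement_mul_mul_of_mem_center (hcenter (mem_map_of_mem _ ha))
      (hcenter (mem_map_of_mem _ ha')), ← map_commutatorElement]
  exact mem_map_of_mem _ (commutator_mem_commutator hb hb')

end Group

namespace SemidirectProduct

variable {N Q : Type*} [Group Q]

section Group

variable [Group N] (φ : Q →* MulAut N)

theorem range_inl_sup_range_inr :
    (inl : N →* N ⋊[φ] Q).range ⊔ (inr : Q →* N ⋊[φ] Q).range = ⊤ := by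
  refine eq_top_iff.mpr fun g _ ↦ ?_
  rw [← inl_left_mul_inr_right g]
  exact mul_mem_sup ⟨g.left, rfl⟩ ⟨g.right, rfl⟩

instance normal_range_inl : (inl : N →* N ⋊[φ] Q).range.Normal :=
  range_inl_eq_ker_rightHom (φ := φ) ▸ inferInstance

end Group

variable [CommGroup N] {φ : Q →* MulAut N}

theorem commutatorElement_inl_eq_inl_inr (n : N) (g : N ⋊[φ] Q) :
    ⁅(inl n : N ⋊[φ] Q), g⁆ = ⁅(inl n : N ⋊[φ] Q), inr g.right⁆ := by
  ext
  · simp [commutatorElement_def, mul_comm, mul_left_comm]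
  · simp [commutatorElement_def]

variable (φ) in
theorem commutator_range_inl_top :
    ⁅(inl : N →* N ⋊[φ] Q).range, ⊤⁆ = ⁅(inr : Q →* N ⋊[φ] Q).range, (inl : N →* N ⋊[φ] Q).range⁆ := by
  rw [commutator_comm (inr : Q →* N ⋊[φ] Q).range]
  refine le_antisymm ?_ (commutator_mono le_rfl le_top)
  rw [commutator_le]
  rintro _ ⟨n, rfl⟩ g -
  rw [commutatorElement_inl_eq_inl_inr]
  exact commutator_mem_commutator ⟨n, rfl⟩ ⟨g.right, rfl⟩

end SemidirectProduct

open SemidirectProduct in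
/-- For a semidirect product `G = N ⋊ Q` with `N` abelian, the commutator subgroup of `G`
equals the set product `[Q,Q]·⁅Q,N⁆`: every element of `[G,G]` is `r * x` with
`r ∈ [Q,Q]` and `x ∈ ⁅Q,N⁆`. -/
theorem commutator_semidirectProduct_eq_mul
    {N Q : Type*} [CommGroup N] [Group Q] (φ : Q →* MulAut N)
    (x : N ⋊[φ] Q) (hx : x ∈ commutator (N ⋊[φ] Q)) :
    ∃ r ∈ (⁅(inr : Q →* N ⋊[φ] Q).range, (inr : Q →* N ⋊[φ] Q).range⁆ :
        Subgroup (N ⋊[φ] Q)),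
      ∃ y ∈ (⁅(inr : Q →* N ⋊[φ] Q).range, (inl : N →* N ⋊[φ] Q).range⁆ :
        Subgroup (N ⋊[φ] Q)),
        x = r * y := by
  have hx' := commutator_le_commutator_sup_commutator_top (range_inl_sup_range_inr φ) hx
  obtain ⟨r, hr, y, hy, rfl⟩ := mem_sup_of_normal_right.mp hx'
  exact ⟨r, hr, y, commutator_range_inl_top φ ▸ hy, rfl⟩
end

section
/- Let G be a compact Lie group such that the quotient homomorphism G → π₀(G) admits a group-theoretic section and π₀(G) is abelian. Then the commutator subgroup [G,G] is connected; in particular [G,G] is contained in the identity component G₀ of G. -/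
/-!
The section `s` makes `s(π₀ G)` a set of pairwise commuting elements meeting every connected
component. A commutator `⁅g, h⁆` with `g ∈ s a • G₀` and `h ∈ s b • G₀` is therefore joined to
`⁅s a, s b⁆ = 1` inside the connected set of commutators of such pairs, so the set of commutators
is preconnected and contains `1`. A subgroup generated by such a set is preconnected: the
connected component of `1` in it is closed under products and inverses and contains the
generators.
-/

open scoped Manifold

instance connectedComponentOfOne_normal {G : Type*} [Group G] [TopologicalSpace G]
    [IsTopologicalGroup G] : (Subgroup.connectedComponentOfOne G).Normal := by
  constructor
  intro n hn g
  have hc : Continuous fun x : G => g * x * g⁻¹ := by continuity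
  have h := hc.image_connectedComponent_subset (1 : G)
  simp only [mul_one, mul_inv_cancel] at h
  exact h ⟨n, hn, rfl⟩

open scoped commutatorElement

section TopologicalGroup

variable {G : Type*} [Group G] [TopologicalSpace G]

theorem mem_connectedComponent_of_mk_eq [IsTopologicalGroup G] {g h : G}
    (hgh : (g : G ⧸ Subgroup.connectedComponentOfOne G) = h) : h ∈ connectedComponent g := by
  have hmem : g⁻¹ * h ∈ connectedComponent (1 : G) := QuotientGroup.eq.mp hgh
  rw [← mul_one g, ← smul_connectedComponent]
  exact ⟨g⁻¹ * h, hmem, by simp⟩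

theorem Subgroup.isPreconnected_closure [ContinuousMul G] [ContinuousInv G] {S : Set G}
    (hS : IsPreconnected S) (hS1 : 1 ∈ S) : IsPreconnected (Subgroup.closure S : Set G) := by
  set H : Set G := ↑(Subgroup.closure S)
  set C := connectedComponentIn H 1
  have hCH : C ⊆ H := connectedComponentIn_subset H 1
  have hC1 : (1 : G) ∈ C := mem_connectedComponentIn (Subgroup.closure S).one_mem
  have absorb : ∀ {T : Set G} {x : G}, IsPreconnected T → x ∈ T → x ∈ C → T ⊆ H → T ⊆ C :=
    fun hT hxT hxC hTH =>
      (hT.subset_connectedComponentIn hxT hTH).trans (connectedComponentIn_eq hxC).ge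
  suffices H ⊆ C from (this.antisymm hCH) ▸ isPreconnected_connectedComponentIn
  intro x hx
  induction hx using Subgroup.closure_induction with
  | mem y hy => exact absorb hS hS1 hC1 Subgroup.subset_closure hy
  | one => exact hC1
  | mul y z hyH _ hy hz =>
    have hyC : (y * ·) '' C ⊆ C :=
      absorb (isPreconnected_connectedComponentIn.image _ (continuous_const_mul y).continuousOn)
        ⟨1, hC1, mul_one y⟩ hy (by rintro _ ⟨w, hw, rfl⟩; exact mul_mem hyH (hCH hw))
    exact hyC ⟨z, hz, rfl⟩
  | inv y _ hy =>
    have hinv : (·⁻¹) '' C ⊆ C :=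
      absorb (isPreconnected_connectedComponentIn.image _ continuous_inv.continuousOn)
        ⟨1, hC1, inv_one⟩ hC1 (by rintro _ ⟨w, hw, rfl⟩; exact inv_mem (hCH hw))
    exact hinv ⟨y, hy, rfl⟩

theorem isPreconnected_commutatorSet_of_forall_mem_connectedComponent [ContinuousMul G]
    [ContinuousInv G] {T : Set G} (hT : ∀ a ∈ T, ∀ b ∈ T, Commute a b)
    (hcover : ∀ g : G, ∃ t ∈ T, g ∈ connectedComponent t) :
    IsPreconnected (commutatorSet G) := by
  have hcont : Continuous fun p : G × G => ⁅p.1, p.2⁆ := by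
    simp only [commutatorElement_def]
    fun_prop
  refine isPreconnected_of_forall 1 ?_
  rintro _ ⟨g, h, rfl⟩
  obtain ⟨a, haT, hga⟩ := hcover g
  obtain ⟨b, hbT, hhb⟩ := hcover h
  refine ⟨(fun p : G × G => ⁅p.1, p.2⁆) '' (connectedComponent a ×ˢ connectedComponent b),
    ?_, ?_, ⟨(g, h), ⟨hga, hhb⟩, rfl⟩, ?_⟩
  · rintro _ ⟨⟨x, y⟩, -, rfl⟩
    exact ⟨x, y, rfl⟩
  · exact ⟨(a, b), ⟨mem_connectedComponent, mem_connectedComponent⟩,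
      commutatorElement_eq_one_iff_commute.mpr (hT a haT b hbT)⟩
  · exact (isPreconnected_connectedComponent.prod isPreconnected_connectedComponent).image _
      hcont.continuousOn

end TopologicalGroup

theorem commutator_connected_of_section_of_abelian_pi0_general
    {G : Type*} [Group G] [TopologicalSpace G] [IsTopologicalGroup G]
    (s : (G ⧸ Subgroup.connectedComponentOfOne G) →* G)
    (hs : (QuotientGroup.mk' (Subgroup.connectedComponentOfOne G)).comp s = MonoidHom.id _)
    (habel : ∀ a b : G ⧸ Subgroup.connectedComponentOfOne G, a * b = b * a) :
    IsConnected ((commutator G : Set G)) ∧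
      (commutator G : Set G) ⊆ connectedComponent (1 : G) := by
  have hcomm : ∀ a ∈ Set.range s, ∀ b ∈ Set.range s, Commute a b := by
    rintro _ ⟨a, rfl⟩ _ ⟨b, rfl⟩
    rw [Commute, SemiconjBy, ← map_mul, ← map_mul, habel]
  have hcover : ∀ g : G, ∃ t ∈ Set.range s, g ∈ connectedComponent t := fun g =>
    ⟨s g, Set.mem_range_self _,
      mem_connectedComponent_of_mk_eq (DFunLike.congr_fun hs (g : G ⧸ _))⟩
  have hconn : IsPreconnected (commutator G : Set G) := by
    rw [commutator_eq_closure]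
    exact Subgroup.isPreconnected_closure
      (isPreconnected_commutatorSet_of_forall_mem_connectedComponent hcomm hcover)
      (one_mem_commutatorSet G)
  have h1 : (1 : G) ∈ (commutator G : Set G) := (commutator G).one_mem
  exact ⟨⟨⟨1, h1⟩, hconn⟩, hconn.subset_connectedComponent h1⟩

/-- Let `G` be a compact Lie group such that the quotient map `G → π₀(G) = G/G₀` admits a
group-theoretic section and `π₀(G)` is abelian.  Then the commutator subgroup `[G,G]` is
connected; in particular it is contained in the identity component `G₀`. -/
theorem commutator_connected_of_section_of_abelian_pi0
    {E : Type*} [NormedAddCommGroup E] [NormedSpace ℝ E] [FiniteDimensional ℝ E]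
    {G : Type*} [Group G] [TopologicalSpace G] [ChartedSpace E G]
    [LieGroup 𝓘(ℝ, E) (⊤ : ℕ∞) G] [CompactSpace G] [IsTopologicalGroup G]
    (s : (G ⧸ Subgroup.connectedComponentOfOne G) →* G)
    (hs : (QuotientGroup.mk' (Subgroup.connectedComponentOfOne G)).comp s = MonoidHom.id _)
    (habel : ∀ a b : G ⧸ Subgroup.connectedComponentOfOne G, a * b = b * a) :
    IsConnected ((commutator G : Set G)) ∧
      (commutator G : Set G) ⊆ connectedComponent (1 : G) :=
  commutator_connected_of_section_of_abelian_pi0_general s hs habel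
end
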